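/- The 3-dimensional left ideals of Λ are exactly the subspaces U(a,b,c) with (a,b,c) ∈ k³ \ {(0,0,0)}. They have the following structure: U(1,−1,0) = Λ(x−y) ⊕ Λzx is a direct sum of left Λ-submodules; U(0,0,1) = Λz ⊕ Λyx is a direct sum of left Λ-submodules; and if a+b ≠ 0 or ac ≠ 0, then U(a,b,c) = Λ(ax+by+cz) is a cyclic (local, hence indecomposable) left Λ-module. -/

import Mathlib

open CategoryTheory Limits Opposite

/-- The algebra `Λ = Λ(q)` of Ringel–Zhang: a `k`-algebra with distinguished elements
`x, y, z` satisfying the defining relations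
`x² = y² = z² = 0`, `yz = 0`, `xy + q·yx = 0`, `xz = zx`, `zy = zx`,
and admitting the `k`-basis `{1, x, y, z, yx, zx}`.
Any such algebra is canonically isomorphic to the quotient of the free algebra
`k⟨x,y,z⟩` by the two-sided ideal generated by these relations. -/
structure LambdaAlg (k : Type) [Field k] (q : k) (Λ : Type) [Ring Λ] [Algebra k Λ] :
    Type where
  x : Λ
  y : Λ
  z : Λ
  hxx : x * x = 0
  hyy : y * y = 0
  hzz : z * z = 0
  hyz : y * z = 0
  hxy : x * y + q • (y * x) = 0
  hxz : x * z - z * x = 0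
  hzy : z * y - z * x = 0
  basis : Module.Basis (Fin 6) k Λ
  hb0 : basis 0 = 1
  hb1 : basis 1 = x
  hb2 : basis 2 = y
  hb3 : basis 3 = z
  hb4 : basis 4 = y * x
  hb5 : basis 5 = z * x

namespace LambdaAlg

variable {k : Type} [Field k] {q : k} {Λ : Type} [Ring Λ] [Algebra k Λ]

/-- The element `ax + by + cz` of `Λ`. -/
def w (D : LambdaAlg k q Λ) (a b c : k) : Λ := a • D.x + b • D.y + c • D.z

/-- The left ideal `U(a,b,c) = Λ(ax+by+cz) + Λ·yx + Λ·zx` of `Λ`. -/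
def U (D : LambdaAlg k q Λ) (a b c : k) : Submodule Λ Λ :=
  Submodule.span Λ {D.w a b c, D.y * D.x, D.z * D.x}

/-- The left `Λ`-module `M(a,b,c) = Λ/U(a,b,c)`. -/
abbrev M (D : LambdaAlg k q Λ) (a b c : k) : Type := Λ ⧸ D.U a b c

/-- The right ideal `U′(a,b,c) = (ax+by+cz)Λ + yx·Λ + zx·Λ` of `Λ`,
viewed as a `Λᵐᵒᵖ`-submodule of `Λ`. -/
def U' (D : LambdaAlg k q Λ) (a b c : k) : Submodule Λᵐᵒᵖ Λ :=
  Submodule.span Λᵐᵒᵖ {D.w a b c, D.y * D.x, D.z * D.x}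

/-- The right `Λ`-module `M′(a,b,c) = Λ/U′(a,b,c)` (a module over `Λᵐᵒᵖ`). -/
abbrev M' (D : LambdaAlg k q Λ) (a b c : k) : Type := Λ ⧸ D.U' a b c

/-- The `k`-subspace `{m ∈ M : x·m = y·m = z·m = 0}` of a left `Λ`-module `M`;
since `x, y, z` generate `rad Λ` and every simple `Λ`-module is isomorphic to `k`,
this is the socle of `M`. -/
def ann (D : LambdaAlg k q Λ) (M : Type) [AddCommGroup M] [Module k M] [Module Λ M]
    [IsScalarTower k Λ M] : Submodule k M where
  carrier := {m | D.x • m = 0 ∧ D.y • m = 0 ∧ D.z • m = 0}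
  add_mem' := by
    rintro a b ⟨h1, h2, h3⟩ ⟨g1, g2, g3⟩
    simp [smul_add, h1, h2, h3, g1, g2, g3]
  zero_mem' := by simp
  smul_mem' := by
    rintro a m ⟨h1, h2, h3⟩
    refine ⟨?_, ?_, ?_⟩ <;> rw [smul_comm] <;> simp [h1, h2, h3]

/-- The submodule `(rad Λ)·M = x·M + y·M + z·M` of a left `Λ`-module `M`. -/
def radM (D : LambdaAlg k q Λ) (M : Type) [AddCommGroup M] [Module Λ M] :
    Submodule Λ M :=
  Submodule.span Λ
    (Set.range (fun m : M => D.x • m) ∪ Set.range (fun m : M => D.y • m) ∪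
      Set.range (fun m : M => D.z • m))

end LambdaAlg

/-- A module is indecomposable if it is nonzero and is not the direct sum of two
nonzero submodules. -/
def IsIndecomposable (R : Type) [Ring R] (M : Type) [AddCommGroup M] [Module R M] :
    Prop :=
  Nontrivial M ∧
    ∀ N₁ N₂ : Submodule R M, N₁ ⊓ N₂ = ⊥ → N₁ ⊔ N₂ = ⊤ → N₁ = ⊥ ∨ N₂ = ⊥

/-- A module is torsionless if it admits an injective linear map into a finite free
module. -/
def IsTorsionless (R : Type) [Ring R] (M : Type) [AddCommGroup M] [Module R M] : Prop :=
  ∃ (n : ℕ) (f : M →ₗ[R] (Fin n → R)), Function.Injective f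

/-- The canonical evaluation map `M → M** = Hom_{Λᵒᵖ}(Hom_Λ(M, Λ), Λ)`,
sending `m` to `f ↦ f m`. -/
def evalMap (Λ : Type) [Ring Λ] (M : Type) [AddCommGroup M] [Module Λ M] :
    M → ((M →ₗ[Λ] Λ) →ₗ[Λᵐᵒᵖ] Λ) := fun m =>
  { toFun := fun f => f m
    map_add' := fun _ _ => rfl
    map_smul' := fun _ _ => rfl }

/-- The transformation `ω′(a,b,c) = (a, q⁻¹b, −((a+q⁻¹b)/a)·c)` on triples. -/
def omegaPrime {k : Type} [Field k] (q : k) (t : k × k × k) : k × k × k :=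
  (t.1, q⁻¹ * t.2.1, -((t.1 + q⁻¹ * t.2.1) / t.1) * t.2.2)

/-!
Every element of `Λ` is `u₀ + (ax + by + cz) + s` with `s` in `soc Λ = k·yx ⊕ k·zx`. Left
multiplication by `l` acts on `soc Λ` as the scalar `l₀` and sends `ax + by + cz` to
`l₀(ax + by + cz) + (l₂a − q l₁b)·yx + (l₁c + l₃(a + b))·zx`. Hence `U(a,b,c)` is
`k(ax + by + cz) ⊕ soc Λ`, of dimension 3. Multiplying `ax + by + cz + s` by `y`, `z`, `x`
gives `a·yx`, `(a + b)·zx` and `c·zx − qb·yx`, which span `soc Λ` as soon as `a + b ≠ 0` or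
`ac ≠ 0`; so any left ideal containing such an element contains `U(a,b,c)`. This gives
cyclicity, and also indecomposability: every submodule of `U(a,b,c)` then either lies in
`soc Λ` or is everything.

For the classification: the radical is nilpotent, so a proper left ideal has `u₀ = 0`
throughout. A 3-dimensional one either contains an element as above, and then equals
`U(a,b,c)` by dimension, or lies in `U(1,−1,0) ∪ U(0,0,1)`, hence in one of them.
-/

section General

open Submodule

variable {K A : Type*} [Field K] [Ring A] [Algebra K A]

theorem Submodule.restrictScalars_span_of_mul_mem {s : Set A}
    (h : ∀ a : A, ∀ v ∈ span K s, a * v ∈ span K s) :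
    (span A s).restrictScalars K = span K s := by
  refine le_antisymm ?_ (span_le_restrictScalars K A s)
  let V : Submodule A A := { span K s with smul_mem' := h }
  exact span_le (p := V) |>.mpr subset_span

theorem Submodule.eq_of_le_of_finrank_eq_of_isScalarTower {M : Type*} [AddCommGroup M]
    [Module K M] [Module A M] [IsScalarTower K A M] [FiniteDimensional K M]
    {S₁ S₂ : Submodule A M} (hle : S₁ ≤ S₂)
    (h : Module.finrank K S₁ = Module.finrank K S₂) : S₁ = S₂ :=
  restrictScalars_injective K A M <| eq_of_le_of_finrank_eq (S₁ := S₁.restrictScalars K) hle h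

theorem Submodule.mem_and_mem_of_smul_mem {M : Type*} [AddCommGroup M] [Module K M]
    (W : Submodule K M) {q a b c : K} (hq : q ≠ 0) (habc : a + b ≠ 0 ∨ a * c ≠ 0) {Y Z : M}
    (hY : a • Y ∈ W) (hZ : (a + b) • Z ∈ W) (hYZ : c • Z - (q * b) • Y ∈ W) :
    Y ∈ W ∧ Z ∈ W := by
  have hZ_of_hY : Y ∈ W → Z ∈ W := fun hY' ↦ by
    rcases habc with hab | hac
    · exact (W.smul_mem_iff hab).mp hZ
    · refine (W.smul_mem_iff (right_ne_zero_of_mul hac)).mp ?_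
      simpa using W.add_mem hYZ (W.smul_mem (q * b) hY')
  by_cases ha : a = 0
  · have hb : b ≠ 0 := by simpa [ha] using habc
    have hZ' : Z ∈ W := (W.smul_mem_iff (by simpa [ha] using hb)).mp hZ
    refine ⟨(W.smul_mem_iff (mul_ne_zero hq hb)).mp ?_, hZ'⟩
    simpa using W.sub_mem (W.smul_mem c hZ') hYZ
  · have hY' : Y ∈ W := (W.smul_mem_iff ha).mp hY
    exact ⟨hY', hZ_of_hY hY'⟩

theorem isIndecomposable_of_forall_le_or_eq_top {R M : Type} [Ring R] [AddCommGroup M]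
    [Module R M] (S : Submodule R M) (hS : S ≠ ⊤)
    (h : ∀ N : Submodule R M, N ≤ S ∨ N = ⊤) :
    IsIndecomposable R M := by
  refine ⟨?_, fun N₁ N₂ hinf hsup ↦ ?_⟩
  · by_contra hM
    have := not_nontrivial_iff_subsingleton.mp hM
    exact hS (Subsingleton.elim _ _)
  rcases h N₁ with h₁ | rfl
  · rcases h N₂ with h₂ | rfl
    · exact absurd (top_le_iff.mp (hsup ▸ sup_le h₁ h₂)) hS
    · exact .inl (inf_top_eq N₁ ▸ hinf)
  · exact .inr (top_inf_eq N₂ ▸ hinf)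

end General

namespace LambdaAlg

open Submodule

variable {k : Type} [Field k] {q : k} {Λ : Type} [Ring Λ] [Algebra k Λ] (D : LambdaAlg k q Λ)

theorem x_mul_y : D.x * D.y = -(q • (D.y * D.x)) := eq_neg_of_add_eq_zero_left D.hxy
theorem x_mul_z : D.x * D.z = D.z * D.x := sub_eq_zero.mp D.hxz
theorem z_mul_y : D.z * D.y = D.z * D.x := sub_eq_zero.mp D.hzy

-- With these right-associated forms of the relations, `simp only [mul_assoc, ...]` reduces any
-- product of generators to a combination of `x, y, z, yx, zx`.
theorem y_mul_y_mul (u : Λ) : D.y * (D.y * u) = 0 := by rw [← mul_assoc, D.hyy, zero_mul]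
theorem z_mul_z_mul (u : Λ) : D.z * (D.z * u) = 0 := by rw [← mul_assoc, D.hzz, zero_mul]
theorem y_mul_z_mul (u : Λ) : D.y * (D.z * u) = 0 := by rw [← mul_assoc, D.hyz, zero_mul]
theorem x_mul_y_mul (u : Λ) : D.x * (D.y * u) = -(q • (D.y * (D.x * u))) := by
  rw [← mul_assoc, D.x_mul_y, neg_mul, smul_mul_assoc, mul_assoc]
theorem x_mul_z_mul (u : Λ) : D.x * (D.z * u) = D.z * (D.x * u) := by
  rw [← mul_assoc, D.x_mul_z, mul_assoc]
theorem z_mul_y_mul (u : Λ) : D.z * (D.y * u) = D.z * (D.x * u) := by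
  rw [← mul_assoc, D.z_mul_y, mul_assoc]

theorem eq_repr (u : Λ) :
    u = D.basis.repr u 0 • 1 + D.w (D.basis.repr u 1) (D.basis.repr u 2) (D.basis.repr u 3)
      + D.basis.repr u 4 • (D.y * D.x) + D.basis.repr u 5 • (D.z * D.x) := by
  conv_lhs => rw [← D.basis.sum_repr u]
  simp only [Fin.sum_univ_six, D.hb0, D.hb1, D.hb2, D.hb3, D.hb4, D.hb5, w, add_assoc]

theorem mul_w (l : Λ) (a b c : k) :
    l * D.w a b c = D.basis.repr l 0 • D.w a b c
      + (D.basis.repr l 2 * a - q * (D.basis.repr l 1 * b)) • (D.y * D.x)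
      + (D.basis.repr l 1 * c + D.basis.repr l 3 * (a + b)) • (D.z * D.x) := by
  conv_lhs => rw [D.eq_repr l]
  simp only [w, add_mul, mul_add, smul_mul_assoc, mul_smul_comm, one_mul, mul_assoc, D.hxx,
    D.hyy, D.hzz, D.hyz, D.x_mul_y, D.x_mul_z, D.z_mul_y, D.y_mul_y_mul, D.z_mul_z_mul,
    D.y_mul_z_mul, D.z_mul_y_mul, mul_neg, mul_zero, smul_zero, smul_neg]
  module

theorem mul_yx (l : Λ) : l * (D.y * D.x) = D.basis.repr l 0 • (D.y * D.x) := by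
  conv_lhs => rw [D.eq_repr l]
  simp only [w, add_mul, smul_mul_assoc, one_mul, mul_assoc, D.hxx, D.y_mul_y_mul,
    D.x_mul_y_mul, D.z_mul_y_mul, mul_zero, smul_zero, neg_zero, add_zero]

theorem mul_zx (l : Λ) : l * (D.z * D.x) = D.basis.repr l 0 • (D.z * D.x) := by
  conv_lhs => rw [D.eq_repr l]
  simp only [w, add_mul, smul_mul_assoc, one_mul, mul_assoc, D.hxx, D.z_mul_z_mul,
    D.y_mul_z_mul, D.x_mul_z_mul, mul_zero, smul_zero, add_zero]

theorem eq_zero_of_smul_w_add {a b c t s r : k} (habc : (a, b, c) ≠ (0, 0, 0))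
    (h : t • D.w a b c + s • (D.y * D.x) + r • (D.z * D.x) = 0) :
    t = 0 ∧ s = 0 ∧ r = 0 := by
  have hcoeff := Fintype.linearIndependent_iff.mp D.basis.linearIndependent
    ![0, t * a, t * b, t * c, s, r] (by
      rw [Fin.sum_univ_six, D.hb0, D.hb1, D.hb2, D.hb3, D.hb4, D.hb5, ← h]
      simp only [w, Matrix.cons_val_zero, Matrix.cons_val_one, Matrix.cons_val, zero_smul]
      module)
  refine ⟨?_, hcoeff 4, hcoeff 5⟩
  by_contra ht
  exact habc (by simpa [ht] using And.intro (hcoeff 1) (And.intro (hcoeff 2) (hcoeff 3)))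

theorem linearIndependent_w_yx_zx {a b c : k} (habc : (a, b, c) ≠ (0, 0, 0)) :
    LinearIndependent k ![D.w a b c, D.y * D.x, D.z * D.x] := by
  refine Fintype.linearIndependent_iff.mpr fun g hg i ↦ ?_
  obtain ⟨h0, h1, h2⟩ := D.eq_zero_of_smul_w_add habc (by simpa [Fin.sum_univ_three] using hg)
  fin_cases i <;> assumption

theorem U_restrictScalars (a b c : k) :
    (D.U a b c).restrictScalars k = span k {D.w a b c, D.y * D.x, D.z * D.x} := by
  refine restrictScalars_span_of_mul_mem fun l v hv ↦ ?_
  obtain ⟨t, s, r, rfl⟩ := mem_span_triple.mp hv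
  refine mem_span_triple.mpr ⟨t * D.basis.repr l 0,
    t * (D.basis.repr l 2 * a - q * (D.basis.repr l 1 * b)) + s * D.basis.repr l 0,
    t * (D.basis.repr l 1 * c + D.basis.repr l 3 * (a + b)) + r * D.basis.repr l 0, ?_⟩
  simp only [mul_add, mul_smul_comm, D.mul_w, D.mul_yx, D.mul_zx]
  module

theorem mem_U_iff {a b c : k} {v : Λ} :
    v ∈ D.U a b c ↔
      ∃ t s r : k, t • D.w a b c + s • (D.y * D.x) + r • (D.z * D.x) = v := by
  rw [← restrictScalars_mem k, U_restrictScalars, mem_span_triple]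

theorem finrank_U {a b c : k} (habc : (a, b, c) ≠ (0, 0, 0)) :
    Module.finrank k (D.U a b c) = 3 := by
  change Module.finrank k ((D.U a b c).restrictScalars k) = 3
  have hrange :
      Set.range ![D.w a b c, D.y * D.x, D.z * D.x] = {D.w a b c, D.y * D.x, D.z * D.x} := by
    rw [Matrix.range_cons, Matrix.range_cons_cons_empty, Set.singleton_union]
  rw [U_restrictScalars, ← hrange, finrank_span_eq_card (D.linearIndependent_w_yx_zx habc),
    Fintype.card_fin]

def soc : Submodule Λ Λ := span Λ {D.y * D.x, D.z * D.x}

theorem soc_restrictScalars : D.soc.restrictScalars k = span k {D.y * D.x, D.z * D.x} := by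
  refine restrictScalars_span_of_mul_mem fun l v hv ↦ ?_
  obtain ⟨s, r, rfl⟩ := mem_span_pair.mp hv
  refine mem_span_pair.mpr ⟨D.basis.repr l 0 * s, D.basis.repr l 0 * r, ?_⟩
  simp only [mul_add, mul_smul_comm, D.mul_yx, D.mul_zx, smul_comm s, smul_comm r, smul_smul]

theorem w_notMem_soc {a b c : k} (habc : (a, b, c) ≠ (0, 0, 0)) : D.w a b c ∉ D.soc := by
  rw [← restrictScalars_mem k, soc_restrictScalars, mem_span_pair]
  rintro ⟨s, r, h⟩
  exact one_ne_zero (D.eq_zero_of_smul_w_add (t := 1) (s := -s) (r := -r) habc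
    (by rw [← h]; module)).1

theorem U_le_of_w_add_mem (hq : q ≠ 0) {a b c s r : k} (hcond : a + b ≠ 0 ∨ a * c ≠ 0)
    {V : Submodule Λ Λ} (hu : D.w a b c + s • (D.y * D.x) + r • (D.z * D.x) ∈ V) :
    D.U a b c ≤ V := by
  set u := D.w a b c + s • (D.y * D.x) + r • (D.z * D.x) with hu_def
  have hx : D.x * u = c • (D.z * D.x) - (q * b) • (D.y * D.x) := by
    simp only [u, w, mul_add, mul_smul_comm, D.hxx, D.x_mul_y, D.x_mul_z, D.x_mul_y_mul,
      D.x_mul_z_mul, mul_zero, smul_zero, smul_neg, neg_zero, add_zero]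
    module
  have hy : D.y * u = a • (D.y * D.x) := by
    simp only [u, w, mul_add, mul_smul_comm, D.hyy, D.hyz, D.y_mul_y_mul, D.y_mul_z_mul,
      smul_zero, add_zero]
  have hz : D.z * u = (a + b) • (D.z * D.x) := by
    simp only [u, w, mul_add, mul_smul_comm, D.hzz, D.z_mul_y, D.z_mul_y_mul, D.z_mul_z_mul,
      D.hxx, mul_zero, smul_zero, add_zero]
    module
  obtain ⟨hyx, hzx⟩ := (V.restrictScalars k).mem_and_mem_of_smul_mem hq hcond
    (hy ▸ Ideal.mul_mem_left V D.y hu) (hz ▸ Ideal.mul_mem_left V D.z hu)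
    (hx ▸ Ideal.mul_mem_left V D.x hu)
  have hw : D.w a b c ∈ V := by
    rw [show D.w a b c = u - s • (D.y * D.x) - r • (D.z * D.x) by rw [hu_def]; abel]
    exact V.sub_mem (V.sub_mem hu (V.smul_of_tower_mem s hyx)) (V.smul_of_tower_mem r hzx)
  rw [U, span_le]
  rintro v (rfl | rfl | rfl) <;> assumption

theorem U_eq_span_w (hq : q ≠ 0) {a b c : k} (hcond : a + b ≠ 0 ∨ a * c ≠ 0) :
    D.U a b c = span Λ {D.w a b c} :=
  le_antisymm (D.U_le_of_w_add_mem hq (s := 0) (r := 0) hcond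
      (by simp [mem_span_singleton_self]))
    (span_mono (Set.singleton_subset_iff.mpr (Set.mem_insert _ _)))

theorem isIndecomposable_U (hq : q ≠ 0) {a b c : k} (habc : (a, b, c) ≠ (0, 0, 0))
    (hcond : a + b ≠ 0 ∨ a * c ≠ 0) : IsIndecomposable Λ (D.U a b c) := by
  refine isIndecomposable_of_forall_le_or_eq_top (D.soc.comap (D.U a b c).subtype)
    (fun htop ↦ D.w_notMem_soc habc (comap_subtype_eq_top.mp htop (subset_span (by simp))))
    fun N ↦ or_iff_not_imp_left.mpr fun hN ↦ ?_
  obtain ⟨n, hnN, hn⟩ := SetLike.not_le_iff_exists.mp hN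
  obtain ⟨t, s, r, htsr⟩ := D.mem_U_iff.mp n.2
  have ht : t ≠ 0 := by
    rintro rfl
    refine hn (mem_comap.mpr ?_)
    rw [subtype_apply, ← htsr, zero_smul, zero_add]
    exact add_mem (smul_of_tower_mem _ s (subset_span (by simp)))
      (smul_of_tower_mem _ r (subset_span (by simp)))
  have hle : D.U a b c ≤ N.map (D.U a b c).subtype := by
    refine D.U_le_of_w_add_mem hq (s := t⁻¹ * s) (r := t⁻¹ * r) hcond ?_
    convert (N.map (D.U a b c).subtype).smul_of_tower_mem t⁻¹ (mem_map_of_mem hnN) using 1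
    rw [subtype_apply, ← htsr]
    simp only [smul_add, smul_smul, inv_mul_cancel₀ ht, one_smul]
  rw [← comap_map_eq_of_injective (injective_subtype _) N, comap_subtype_eq_top]
  exact hle

theorem mul_mul_self_eq_zero {s : Λ} (hs : D.basis.repr s 0 = 0) : s * (s * s) = 0 := by
  have hss := congrArg (s * ·) (D.eq_repr s)
  simp only [mul_add, mul_smul_comm, D.mul_w, D.mul_yx, D.mul_zx, hs, zero_smul,
    zero_add] at hss
  rw [hss]
  simp only [mul_add, mul_smul_comm, D.mul_yx, D.mul_zx, hs, zero_smul, smul_zero, add_zero]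

theorem isUnit_of_repr_zero_ne_zero {u : Λ} (hu : D.basis.repr u 0 ≠ 0) : IsUnit u := by
  set n := u - algebraMap k Λ (D.basis.repr u 0)
  have hn : D.basis.repr n 0 = 0 := by
    simp [n, Algebra.algebraMap_eq_smul_one, ← D.hb0]
  have hnil : IsNilpotent n := ⟨3, by rw [pow_three]; exact D.mul_mul_self_eq_zero hn⟩
  simpa [n] using hnil.isUnit_add_left_of_commute ((Ne.isUnit hu).map (algebraMap k Λ))
    (Algebra.commute_algebraMap_right _ _)

theorem repr_zero_eq_zero_of_mem {V : Submodule Λ Λ} (hV : V ≠ ⊤) {u : Λ} (hu : u ∈ V) :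
    D.basis.repr u 0 = 0 :=
  by_contra fun h ↦ hV (Ideal.eq_top_of_isUnit_mem V hu (D.isUnit_of_repr_zero_ne_zero h))

theorem mem_U_one_neg_one_zero_or_mem_U_zero_zero_one {u : Λ} (h0 : D.basis.repr u 0 = 0)
    (h12 : D.basis.repr u 1 + D.basis.repr u 2 = 0)
    (h13 : D.basis.repr u 1 * D.basis.repr u 3 = 0) :
    u ∈ D.U 1 (-1) 0 ∨ u ∈ D.U 0 0 1 := by
  rw [D.mem_U_iff, D.mem_U_iff, D.eq_repr u, h0, eq_neg_of_add_eq_zero_right h12]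
  rcases mul_eq_zero.mp h13 with h1 | h3
  · refine .inr ⟨D.basis.repr u 3, D.basis.repr u 4, D.basis.repr u 5, ?_⟩
    simp only [w, h1]
    module
  · refine .inl ⟨D.basis.repr u 1, D.basis.repr u 4, D.basis.repr u 5, ?_⟩
    simp only [w, h3]
    module

theorem exists_eq_U_of_finrank_eq_three (hq : q ≠ 0) {V : Submodule Λ Λ}
    (hV : Module.finrank k V = 3) : ∃ a b c : k, (a, b, c) ≠ (0, 0, 0) ∧ V = D.U a b c := by
  have : Module.Finite k Λ := .of_basis D.basis
  have hV_ne_top : V ≠ ⊤ := by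
    rintro rfl
    have h6 : Module.finrank k ((⊤ : Submodule Λ Λ).restrictScalars k) = 6 := by
      rw [restrictScalars_top, finrank_top, Module.finrank_eq_card_basis D.basis,
        Fintype.card_fin]
    exact absurd (hV.symm.trans h6) (by norm_num)
  have hrad (u : Λ) (hu : u ∈ V) : D.basis.repr u 0 = 0 :=
    D.repr_zero_eq_zero_of_mem hV_ne_top hu
  by_cases hgen : ∃ u ∈ V, D.basis.repr u 1 + D.basis.repr u 2 ≠ 0 ∨
      D.basis.repr u 1 * D.basis.repr u 3 ≠ 0
  · obtain ⟨u, hu, hcond⟩ := hgen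
    have habc : (D.basis.repr u 1, D.basis.repr u 2, D.basis.repr u 3) ≠ (0, 0, 0) := by
      intro h
      simp_all [Prod.ext_iff]
    have h0 := hrad u hu
    rw [D.eq_repr u, h0, zero_smul, zero_add] at hu
    exact ⟨_, _, _, habc, (eq_of_le_of_finrank_eq_of_isScalarTower
      (D.U_le_of_w_add_mem hq hcond hu) (by rw [D.finrank_U habc, hV])).symm⟩
  · push Not at hgen
    have hunion : (V : Set Λ) ⊆ D.U 1 (-1) 0 ∪ D.U 0 0 1 := fun u hu ↦
      D.mem_U_one_neg_one_zero_or_mem_U_zero_zero_one (hrad u hu) (hgen u hu).1 (hgen u hu).2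
    rcases AddSubgroupClass.subset_union.mp hunion with hle | hle
    · exact ⟨1, -1, 0, by simp, eq_of_le_of_finrank_eq_of_isScalarTower hle
        (by rw [hV, D.finrank_U (by simp)])⟩
    · exact ⟨0, 0, 1, by simp, eq_of_le_of_finrank_eq_of_isScalarTower hle
        (by rw [hV, D.finrank_U (by simp)])⟩

theorem w_one_neg_one_zero : D.w 1 (-1) 0 = D.x - D.y := by
  simp [w, sub_eq_add_neg]

theorem w_zero_zero_one : D.w 0 0 1 = D.z := by
  simp [w]

theorem span_x_sub_y_sup_span_zx :
    span Λ {D.x - D.y} ⊔ span Λ {D.z * D.x} = D.U 1 (-1) 0 := by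
  have hyx : span Λ {D.y * D.x} ≤ span Λ {D.x - D.y} :=
    span_singleton_le_iff_mem _ _ |>.mpr <|
      mem_span_singleton.mpr ⟨D.y, by rw [smul_eq_mul, mul_sub, D.hyy, sub_zero]⟩
  rw [U, w_one_neg_one_zero, span_insert, span_insert, ← sup_assoc, sup_eq_left.mpr hyx]

theorem span_z_sup_span_yx : span Λ {D.z} ⊔ span Λ {D.y * D.x} = D.U 0 0 1 := by
  have hzx : span Λ {D.z * D.x} ≤ span Λ {D.z} :=
    span_singleton_le_iff_mem _ _ |>.mpr <|
      mem_span_singleton.mpr ⟨D.x, by rw [smul_eq_mul, D.x_mul_z]⟩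
  rw [U, w_zero_zero_one, span_insert, span_insert, sup_comm (span Λ {D.y * D.x}),
    ← sup_assoc, sup_eq_left.mpr hzx]

theorem span_x_sub_y_inf_span_zx : span Λ {D.x - D.y} ⊓ span Λ {D.z * D.x} = ⊥ := by
  refine eq_bot_iff.mpr fun v hv ↦ ?_
  obtain ⟨⟨l, rfl⟩, ⟨m, hm⟩⟩ := And.imp mem_span_singleton.mp mem_span_singleton.mp hv
  have hl : l • (D.x - D.y) = D.basis.repr l 0 • (D.x - D.y)
      + (D.basis.repr l 2 + q * D.basis.repr l 1) • (D.y * D.x) := by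
    rw [← w_one_neg_one_zero, smul_eq_mul, mul_w]
    simp only [mul_one, mul_neg, sub_neg_eq_add, mul_zero, add_neg_cancel, zero_smul, add_zero]
  rw [smul_eq_mul, mul_zx] at hm
  obtain ⟨h₀, h₁, -⟩ := D.eq_zero_of_smul_w_add (a := 1) (b := -1) (c := 0)
    (t := D.basis.repr l 0) (s := D.basis.repr l 2 + q * D.basis.repr l 1)
    (r := -D.basis.repr m 0) (by simp)
    (by rw [w_one_neg_one_zero, neg_smul, ← sub_eq_add_neg, ← hl, hm, sub_self])
  rw [mem_bot, hl, h₀, h₁, zero_smul, zero_smul, add_zero]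

theorem span_z_inf_span_yx : span Λ {D.z} ⊓ span Λ {D.y * D.x} = ⊥ := by
  refine eq_bot_iff.mpr fun v hv ↦ ?_
  obtain ⟨⟨l, rfl⟩, ⟨m, hm⟩⟩ := And.imp mem_span_singleton.mp mem_span_singleton.mp hv
  have hl : l • D.z = D.basis.repr l 0 • D.z + D.basis.repr l 1 • (D.z * D.x) := by
    conv_lhs => rw [smul_eq_mul, ← w_zero_zero_one]
    rw [mul_w, w_zero_zero_one]
    simp only [mul_zero, sub_zero, zero_smul, add_zero, mul_one]
  rw [smul_eq_mul, mul_yx] at hm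
  obtain ⟨h₀, -, h₁⟩ := D.eq_zero_of_smul_w_add (a := 0) (b := 0) (c := 1)
    (t := D.basis.repr l 0) (s := -D.basis.repr m 0) (r := D.basis.repr l 1) (by simp)
    (by rw [w_zero_zero_one, neg_smul, add_right_comm, ← sub_eq_add_neg, ← hl, hm, sub_self])
  rw [mem_bot, hl, h₀, h₁, zero_smul, zero_smul, add_zero]

end LambdaAlg

/-- The 3-dimensional left ideals of `Λ` are exactly the `U(a,b,c)`;
`U(1,−1,0) = Λ(x−y) ⊕ Λzx`, `U(0,0,1) = Λz ⊕ Λyx`, and if `a+b ≠ 0` or `ac ≠ 0`,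
then `U(a,b,c) = Λ(ax+by+cz)` is cyclic and indecomposable. -/
theorem statement5 (k : Type) [Field k] (q : k) (hq : q ≠ 0)
    (Λ : Type) [Ring Λ] [Algebra k Λ] (D : LambdaAlg k q Λ) :
    (∀ U : Submodule Λ Λ, Module.finrank k ↥U = 3 ↔
        ∃ a b c : k, (a, b, c) ≠ (0, 0, 0) ∧ U = D.U a b c)
    ∧ (Submodule.span Λ {D.x - D.y} ⊓ Submodule.span Λ {D.z * D.x} = ⊥
       ∧ Submodule.span Λ {D.x - D.y} ⊔ Submodule.span Λ {D.z * D.x} = D.U 1 (-1) 0)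
    ∧ (Submodule.span Λ {D.z} ⊓ Submodule.span Λ {D.y * D.x} = ⊥
       ∧ Submodule.span Λ {D.z} ⊔ Submodule.span Λ {D.y * D.x} = D.U 0 0 1)
    ∧ (∀ a b c : k, (a, b, c) ≠ (0, 0, 0) → (a + b ≠ 0 ∨ a * c ≠ 0) →
        D.U a b c = Submodule.span Λ {D.w a b c}
        ∧ IsIndecomposable Λ ↥(D.U a b c)) := by
  refine ⟨fun U ↦ ⟨D.exists_eq_U_of_finrank_eq_three hq, ?_⟩,
    ⟨D.span_x_sub_y_inf_span_zx, D.span_x_sub_y_sup_span_zx⟩,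
    ⟨D.span_z_inf_span_yx, D.span_z_sup_span_yx⟩,
    fun a b c habc hcond ↦ ⟨D.U_eq_span_w hq hcond, D.isIndecomposable_U hq habc hcond⟩⟩
  rintro ⟨a, b, c, habc, rfl⟩
  exact D.finrank_U habc
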